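/- arXiv:1408.5152 — 3 statements merged into one kernel-verified Lean document; each statement's English description precedes it below -/
import Mathlib

section
/- Let (R, 𝔪, k) be a commutative noetherian local Cohen–Macaulay ring. If an R-module M is a direct limit of finitely generated maximal CM R-modules, then every system of parameters of R is a weak M-regular sequence. -/
open CategoryTheory IsLocalRing

universe u
/-- A system of parameters of a noetherian local ring `R`: a list of `dim R` elements
of the maximal ideal generating an ideal modulo which `R` has Krull dimension `0`. -/
def IsSystemOfParameters (R : Type u) [CommRing R] [IsLocalRing R] (xs : List R) : Prop :=
  (∀ x ∈ xs, x ∈ maximalIdeal R) ∧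
  (xs.length : WithBot (WithTop ℕ)) = ringKrullDim R ∧
  ringKrullDim (R ⧸ Ideal.span {x | x ∈ xs}) = 0

/-- A local ring is Cohen--Macaulay if every system of parameters is an `R`-regular sequence. -/
def IsCohenMacaulayLocalRing (R : Type u) [CommRing R] [IsLocalRing R] : Prop :=
  ∀ xs : List R, IsSystemOfParameters R xs → RingTheory.Sequence.IsRegular R xs

/-- An `R`-module `M` is weak balanced big Cohen--Macaulay if every system of parameters
of `R` is a weak `M`-regular sequence. -/
def IsWeakBalancedBigCM (R : Type u) [CommRing R] [IsLocalRing R]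
    (M : Type u) [AddCommGroup M] [Module R M] : Prop :=
  ∀ xs : List R, IsSystemOfParameters R xs → RingTheory.Sequence.IsWeaklyRegular M xs

/-- An `R`-module `M` is balanced big Cohen--Macaulay if every system of parameters
of `R` is an `M`-regular sequence. -/
def IsBalancedBigCM (R : Type u) [CommRing R] [IsLocalRing R]
    (M : Type u) [AddCommGroup M] [Module R M] : Prop :=
  ∀ xs : List R, IsSystemOfParameters R xs → RingTheory.Sequence.IsRegular M xs

/-- A finitely generated maximal Cohen--Macaulay module: finitely generated, and every
system of parameters of `R` is a weak `M`-regular sequence. -/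
def IsFGMaximalCM (R : Type u) [CommRing R] [IsLocalRing R]
    (M : Type u) [AddCommGroup M] [Module R M] : Prop :=
  Module.Finite R M ∧ IsWeakBalancedBigCM R M

/-- `M` is (isomorphic to) the direct limit of some directed system of finitely generated
maximal Cohen--Macaulay `R`-modules. -/
def IsDirectLimitOfFGMaximalCM (R : Type u) [CommRing R] [IsLocalRing R]
    (M : Type u) [AddCommGroup M] [Module R M] : Prop :=
  ∃ (ι : Type u) (_ : Preorder ι) (_ : IsDirected ι (· ≤ ·)) (_ : Nonempty ι)
    (_ : DecidableEq ι) (G : ι → Type u) (_ : ∀ i, AddCommGroup (G i))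
    (_ : ∀ i, Module R (G i)) (f : ∀ i j, i ≤ j → G i →ₗ[R] G j)
    (_ : DirectedSystem G fun i j h => f i j h),
    (∀ i, IsFGMaximalCM R (G i)) ∧ Nonempty (Module.DirectLimit G f ≃ₗ[R] M)

set_option synthInstance.maxHeartbeats 800000
set_option maxHeartbeats 1600000

open RingTheory.Sequence Submodule

universe v

section Aux

variable {R : Type u} [CommRing R] {ι : Type v} [Preorder ι]
  [IsDirected ι (· ≤ ·)] [Nonempty ι] [DecidableEq ι]
  (G : ι → Type v) [∀ i, AddCommGroup (G i)] [∀ i, Module R (G i)]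
  (f : ∀ i j, i ≤ j → G i →ₗ[R] G j) [DirectedSystem G fun i j h => f i j h]

lemma smul_top_directLimit_eq_iSup (I : Ideal R) :
    (I • ⊤ : Submodule R (Module.DirectLimit G f)) =
      ⨆ i, (I • ⊤ : Submodule R (G i)).map (Module.DirectLimit.of R ι G f i) := by
  have htop : (⊤ : Submodule R (Module.DirectLimit G f)) =
      ⨆ i, LinearMap.range (Module.DirectLimit.of R ι G f i) := by
    refine le_antisymm (fun z _ => ?_) le_top
    obtain ⟨i, x, rfl⟩ := Module.DirectLimit.exists_of z
    exact Submodule.mem_iSup_of_mem i ⟨x, rfl⟩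
  rw [htop, Submodule.smul_iSup]
  congr 1
  funext i
  rw [Submodule.map_smul'', Submodule.map_top]

lemma mem_smul_top_directLimit {I : Ideal R} {z : Module.DirectLimit G f}
    (hz : z ∈ (I • ⊤ : Submodule R (Module.DirectLimit G f))) :
    ∃ i w, w ∈ (I • ⊤ : Submodule R (G i)) ∧ Module.DirectLimit.of R ι G f i w = z := by
  rw [smul_top_directLimit_eq_iSup] at hz
  have hdir : Directed (· ≤ ·)
      (fun i => (I • ⊤ : Submodule R (G i)).map (Module.DirectLimit.of R ι G f i)) := by
    intro i j
    obtain ⟨k, hik, hjk⟩ := directed_of (· ≤ ·) i j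
    have key : ∀ (a : ι) (ha : a ≤ k),
        (I • ⊤ : Submodule R (G a)).map (Module.DirectLimit.of R ι G f a) ≤
          (I • ⊤ : Submodule R (G k)).map (Module.DirectLimit.of R ι G f k) := by
      rintro a ha _ ⟨w, hw, rfl⟩
      refine ⟨f a k ha w, ?_, Module.DirectLimit.of_f⟩
      have : (I • ⊤ : Submodule R (G a)).map (f a k ha) ≤ I • ⊤ := by
        rw [Submodule.map_smul'', Submodule.map_top]
        exact Submodule.smul_mono le_rfl le_top
      exact this ⟨w, hw, rfl⟩
    exact ⟨k, key i hik, key j hjk⟩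
  obtain ⟨i, hi⟩ := (Submodule.mem_iSup_of_directed _ hdir).1 hz
  obtain ⟨w, hw, rfl⟩ := hi
  exact ⟨i, w, hw, rfl⟩

lemma isWeaklyRegular_directLimit (xs : List R)
    (h : ∀ i, IsWeaklyRegular (G i) xs) :
    IsWeaklyRegular (Module.DirectLimit G f) xs := by
  constructor
  intro n hn
  set I : Ideal R := Ideal.ofList (xs.take n) with hI
  -- injectivity of smul on the quotient
  intro a b hab
  obtain ⟨za, rfl⟩ := Submodule.Quotient.mk_surjective _ a
  obtain ⟨zb, rfl⟩ := Submodule.Quotient.mk_surjective _ b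
  replace hab : xs[n] • Submodule.Quotient.mk za =
      xs[n] • (Submodule.Quotient.mk zb :
        Module.DirectLimit G f ⧸ (I • ⊤ : Submodule R (Module.DirectLimit G f))) := hab
  rw [← sub_eq_zero]
  rw [← Submodule.Quotient.mk_smul, ← Submodule.Quotient.mk_smul,
    ← sub_eq_zero, ← Submodule.Quotient.mk_sub, ← smul_sub,
    Submodule.Quotient.mk_eq_zero] at hab
  rw [← Submodule.Quotient.mk_sub, Submodule.Quotient.mk_eq_zero]
  set z := za - zb with hz
  -- now hab : xs[n] • z ∈ I • ⊤, goal : z ∈ I • ⊤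
  obtain ⟨i, w, hw, hwz⟩ := mem_smul_top_directLimit G f hab
  obtain ⟨i₂, z₂, hz₂⟩ := Module.DirectLimit.exists_of z
  obtain ⟨k, hik, hi₂k⟩ := directed_of (· ≤ ·) i i₂
  have hk : Module.DirectLimit.of R ι G f k
      (xs[n] • f i₂ k hi₂k z₂ - f i k hik w) = 0 := by
    rw [map_sub, map_smul, Module.DirectLimit.of_f, Module.DirectLimit.of_f,
      hz₂, hwz, sub_self]
  obtain ⟨l, hkl, hl⟩ := Module.DirectLimit.of.zero_exact hk
  rw [map_sub, map_smul, sub_eq_zero] at hl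
  -- in G l : xs[n] • (f i₂ l _ z₂) = f k l _ (f i k _ w) ∈ I • ⊤
  have hwl : f k l hkl (f i k hik w) ∈ (I • ⊤ : Submodule R (G l)) := by
    have h1 : (I • ⊤ : Submodule R (G i)).map ((f k l hkl).comp (f i k hik)) ≤ I • ⊤ := by
      rw [Submodule.map_smul'', Submodule.map_top]
      exact Submodule.smul_mono le_rfl le_top
    exact h1 ⟨w, hw, rfl⟩
  have hreg := (h l).regular_mod_prev n hn
  have hmk : Submodule.Quotient.mk (p := (I • ⊤ : Submodule R (G l)))
      (f i₂ (l) (le_trans hi₂k hkl) z₂) = 0 := by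
    apply hreg
    show xs[n] • _ = xs[n] • (0 : G l ⧸ (I • ⊤ : Submodule R (G l)))
    rw [smul_zero, ← Submodule.Quotient.mk_smul, Submodule.Quotient.mk_eq_zero]
    have heq : f i₂ l (le_trans hi₂k hkl) z₂ = f k l hkl (f i₂ k hi₂k z₂) :=
      (Module.DirectedSystem.map_map f hi₂k hkl z₂).symm
    rw [heq, hl]
    exact hwl
  rw [Submodule.Quotient.mk_eq_zero] at hmk
  have : z = Module.DirectLimit.of R ι G f l (f i₂ l (le_trans hi₂k hkl) z₂) := by
    rw [Module.DirectLimit.of_f, hz₂]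
  rw [this]
  rw [smul_top_directLimit_eq_iSup]
  exact Submodule.mem_iSup_of_mem l ⟨_, hmk, rfl⟩

end Aux


/-- **Theorem B, (i) ⟹ (ii).** If `M` is a direct limit of finitely generated maximal CM
`R`-modules, then every system of parameters of `R` is a weak `M`-regular sequence. -/
theorem isWeakBalancedBigCM_of_isDirectLimitOfFGMaximalCM
    (R : Type u) [CommRing R] [IsNoetherianRing R] [IsLocalRing R]
    (hCM : IsCohenMacaulayLocalRing R)
    (M : Type u) [AddCommGroup M] [Module R M]
    (hM : IsDirectLimitOfFGMaximalCM R M) :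
    IsWeakBalancedBigCM R M := by
  intro xs hxs
  obtain ⟨ι, p1, p2, p3, p4, G, g1, g2, f, hsys, hG, ⟨e⟩⟩ := hM
  rw [← e.isWeaklyRegular_congr]
  exact isWeaklyRegular_directLimit G f xs fun i => (hG i).2 xs hxs
end

section
/- Let (R, 𝔪, k) be a commutative noetherian local Cohen–Macaulay ring admitting a dualizing module. Then every R-module M has a preenvelope with respect to the class of weak balanced big CM R-modules: there exists a homomorphism φ : M → W with W weak balanced big CM such that every homomorphism φ' : M → W' with W' weak balanced big CM factors as φ' = ψ ∘ φ for some ψ : W → W'. -/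
open CategoryTheory IsLocalRing

universe u
/-- `Ext^i_R(X, Y)` vanishes. -/
def ExtVanishes (R : Type u) [CommRing R] (i : ℕ) (X Y : Type u)
    [AddCommGroup X] [Module R X] [AddCommGroup Y] [Module R Y] : Prop :=
  Subsingleton (((Ext R (ModuleCat.{u} R) i).obj
    (Opposite.op (ModuleCat.of R X))).obj (ModuleCat.of R Y))


/-- A dualizing module: finitely generated, of finite injective dimension (expressed by
vanishing of `Ext^i(-, Ω)` for all sufficiently large `i`), with `Ext^i(Ω, Ω) = 0` for `i > 0`
and such that the canonical map `R → Hom_R(Ω, Ω)`, `r ↦ r • id`, is bijective. -/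
def IsDualizingModule (R : Type u) [CommRing R] (Ω : Type u)
    [AddCommGroup Ω] [Module R Ω] : Prop :=
  Module.Finite R Ω ∧
  (∃ n : ℕ, ∀ i > n, ∀ (N : Type u) (_ : AddCommGroup N) (_ : Module R N),
    ExtVanishes R i N Ω) ∧
  (∀ i > 0, ExtVanishes R i Ω Ω) ∧
  Function.Bijective (fun r : R => (r • LinearMap.id : Ω →ₗ[R] Ω))

/-!
Weak balanced big CM modules are closed under products and under submodules `N ≤ W` that are
pure for finitely generated ideals, i.e. `I W ∩ N = I N`. Closing a submodule countably often
under finite witnesses of membership in `I W` shows that every submodule of cardinality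
`≤ κ = max(|M|, |R|, ℵ₀)` lies in such a pure submodule of cardinality `≤ κ`. Hence every map
from `M` to a weak balanced big CM module factors through a weak balanced big CM quotient of
`M ⊕ R^(κ)`, and the product of all these quotients is the preenvelope.
-/

universe v

open Cardinal Submodule RingTheory.Sequence

namespace Cardinal

variable {κ : Cardinal.{u}}

theorem mk_finsupp_le_of_le {α β : Type u} [Zero β] (hκ : ℵ₀ ≤ κ) (hα : #α ≤ κ) (hβ : #β ≤ κ) :
    #(α →₀ β) ≤ κ :=
  calc #(α →₀ β) ≤ #(Finset (α × β)) := mk_le_of_injective (Finsupp.graph_injective α β)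
    _ ≤ #(List (α × β)) := by classical exact mk_le_of_surjective List.toFinset_surjective
    _ ≤ max ℵ₀ #(α × β) := mk_list_le_max _
    _ ≤ κ := max_le hκ (by rw [mk_prod, lift_id, lift_id]; exact mul_le_of_le hκ hα hβ)

theorem mk_iUnion_le_of_le {α : Type u} {ι : Type v} {f : ι → Set α} (hκ : ℵ₀ ≤ κ)
    (hι : lift.{u} #ι ≤ lift.{v} κ) (hf : ∀ i, #(f i) ≤ κ) : #(⋃ i, f i) ≤ κ := by
  rw [← lift_le.{v}]
  refine (mk_iUnion_le_lift f).trans (mul_le_of_le (by simpa using hκ) hι ?_)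
  exact ciSup_le' fun i => lift_le.mpr (hf i)

end Cardinal

theorem Submodule.mk_span_le_of_le {R M : Type u} [Semiring R] [AddCommMonoid M] [Module R M]
    {κ : Cardinal.{u}} (hκ : ℵ₀ ≤ κ) (hR : #R ≤ κ) {s : Set M} (hs : #s ≤ κ) :
    #(span R s) ≤ κ := by
  rw [Finsupp.span_eq_range_linearCombination]
  exact mk_range_le.trans (mk_finsupp_le_of_le hκ hs hR)

section WeaklyRegular

variable {R : Type*} [CommRing R]

theorem Submodule.exists_finset_mem_smul_span {W : Type*} [AddCommGroup W] [Module R W]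
    {I : Ideal R} {w : W} (hw : w ∈ I • (⊤ : Submodule R W)) :
    ∃ t : Finset W, w ∈ I • span R (t : Set W) := by
  rw [← span_univ, ← Set.range_id, mem_ideal_smul_span_iff_exists_sum] at hw
  obtain ⟨a, ha, rfl⟩ := hw
  exact ⟨a.support, sum_mem fun m hm => smul_mem_smul (ha m) (subset_span hm)⟩

theorem Submodule.mem_ofList_smul_top_pi_iff {ι : Type*} {W : ι → Type*}
    [∀ i, AddCommGroup (W i)] [∀ i, Module R (W i)] (rs : List R) (f : ∀ i, W i) :
    f ∈ (Ideal.ofList rs • ⊤ : Submodule R (∀ i, W i)) ↔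
      ∀ i, f i ∈ (Ideal.ofList rs • ⊤ : Submodule R (W i)) := by
  refine ⟨fun h i => smul_top_le_comap_smul_top _ (LinearMap.proj i) h, fun h => ?_⟩
  induction rs generalizing f with
  | nil =>
    simp only [Ideal.ofList_nil, bot_smul, mem_bot] at h ⊢
    exact funext h
  | cons r rs ih =>
    simp only [Ideal.ofList_cons_smul, mem_sup, mem_smul_pointwise_iff_exists, mem_top,
      true_and] at h ⊢
    choose a ha b hb hf using h
    choose g hg using ha
    obtain rfl : a = r • g := funext fun i => (hg i).symm
    exact ⟨r • g, ⟨g, rfl⟩, b, ih b hb, funext hf⟩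

theorem RingTheory.Sequence.IsWeaklyRegular.pi {ι : Type*} {W : ι → Type*}
    [∀ i, AddCommGroup (W i)] [∀ i, Module R (W i)] {rs : List R}
    (h : ∀ i, IsWeaklyRegular (W i) rs) : IsWeaklyRegular (∀ i, W i) rs := by
  refine ⟨fun k hk => (isSMulRegular_quotient_iff_mem_of_smul_mem _ _).mpr fun f hf => ?_⟩
  rw [mem_ofList_smul_top_pi_iff] at hf ⊢
  exact fun i => mem_of_isSMulRegular_quotient_of_smul_mem ((h i).regular_mod_prev k hk) (hf i)

variable {W : Type*} [AddCommGroup W] [Module R W]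

def Submodule.IsIdealPure (N : Submodule R W) : Prop :=
  ∀ ys : List R, (Ideal.ofList ys • ⊤ : Submodule R W) ⊓ N ≤ Ideal.ofList ys • N

theorem RingTheory.Sequence.IsWeaklyRegular.submodule {N : Submodule R W} (hN : N.IsIdealPure)
    {rs : List R} (h : IsWeaklyRegular W rs) : IsWeaklyRegular N rs := by
  refine ⟨fun k hk => (isSMulRegular_quotient_iff_mem_of_smul_mem _ _).mpr fun n hn => ?_⟩
  rw [mem_smul_top_iff] at hn ⊢
  have hn' : (n : W) ∈ (Ideal.ofList (rs.take k) • ⊤ : Submodule R W) :=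
    mem_of_isSMulRegular_quotient_of_smul_mem (h.regular_mod_prev k hk)
      (smul_mono_right _ (le_top : N ≤ ⊤) hn)
  exact hN _ ⟨hn', n.2⟩

end WeaklyRegular

section PureHull

variable {R W : Type u} [CommRing R] [AddCommGroup W] [Module R W] {κ : Cardinal.{u}}

theorem Submodule.exists_le_isIdealPure_mk_le (hκ : ℵ₀ ≤ κ) (hR : #R ≤ κ) (P : Submodule R W)
    (hP : #P ≤ κ) : ∃ N : Submodule R W, P ≤ N ∧ N.IsIdealPure ∧ #N ≤ κ := by
  choose wit hwit using fun (w : W) (ys : List R) =>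
    (em (w ∈ (Ideal.ofList ys • ⊤ : Submodule R W))).elim
      (fun hw => (exists_finset_mem_smul_span hw).imp fun _ ht _ => ht)
      (fun hw => ⟨∅, fun hw' => (hw hw').elim⟩)
  let step (Q : Submodule R W) : Submodule R W :=
    span R (Q ∪ ⋃ p : Q × List R, (wit p.1 p.2 : Set W))
  have le_step (Q : Submodule R W) : Q ≤ step Q := Set.subset_union_left.trans subset_span
  have mk_step (Q : Submodule R W) (hQ : #Q ≤ κ) : #(step Q) ≤ κ := by
    refine mk_span_le_of_le hκ hR ((mk_union_le _ _).trans (add_le_of_le hκ hQ ?_))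
    refine mk_iUnion_le_of_le hκ ?_ fun p => ?_
    · rw [lift_id, lift_id, mk_prod, lift_id, lift_id]
      exact mul_le_of_le hκ hQ ((mk_list_le_max R).trans (max_le hκ hR))
    · exact (finset_card_lt_aleph0 _).le.trans hκ
  let chain : ℕ →o Submodule R W := ⟨fun n => step^[n] P, monotone_nat_of_le_succ fun n => by
    rw [Function.iterate_succ_apply']; exact le_step _⟩
  refine ⟨⨆ n, chain n, le_iSup chain 0, ?_, ?_⟩
  · rintro ys w ⟨hw, hwN⟩
    obtain ⟨n, hn⟩ := (mem_iSup_of_directed chain chain.monotone.directed_le).mp hwN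
    have hwit_le : span R (wit w ys : Set W) ≤ chain (n + 1) := by
      show _ ≤ step^[n + 1] P
      rw [Function.iterate_succ_apply', span_le]
      exact fun x hx => subset_span (Or.inr (Set.mem_iUnion.mpr ⟨(⟨w, hn⟩, ys), hx⟩))
    exact smul_mono_right (Ideal.ofList ys) (hwit_le.trans (le_iSup chain (n + 1))) (hwit w ys hw)
  · show #((⨆ n, chain n : Submodule R W) : Set W) ≤ κ
    rw [coe_iSup_of_chain]
    refine mk_iUnion_le_of_le hκ (by simpa using hκ) fun n => ?_
    induction n with
    | zero => exact hP
    | succ n ih =>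
      show #(step^[n + 1] P) ≤ κ
      rw [Function.iterate_succ_apply']
      exact mk_step _ ih

end PureHull

section WeakBalancedBigCM

variable {R : Type u} [CommRing R] [IsLocalRing R]

theorem isWeakBalancedBigCM_pi {ι : Type u} {W : ι → Type u} [∀ i, AddCommGroup (W i)]
    [∀ i, Module R (W i)] (h : ∀ i, IsWeakBalancedBigCM R (W i)) :
    IsWeakBalancedBigCM R (∀ i, W i) :=
  fun xs hxs => IsWeaklyRegular.pi fun i => h i xs hxs

variable {W : Type u} [AddCommGroup W] [Module R W]

theorem IsWeakBalancedBigCM.submodule (hW : IsWeakBalancedBigCM R W) {N : Submodule R W}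
    (hN : N.IsIdealPure) : IsWeakBalancedBigCM R N :=
  fun xs hxs => (hW xs hxs).submodule hN

theorem IsWeakBalancedBigCM.of_linearEquiv {W' : Type u} [AddCommGroup W'] [Module R W']
    (hW : IsWeakBalancedBigCM R W) (e : W' ≃ₗ[R] W) : IsWeakBalancedBigCM R W' :=
  fun xs hxs => (e.isWeaklyRegular_congr xs).mpr (hW xs hxs)

end WeakBalancedBigCM

theorem exists_linearMap_comp_inl_eq_and_isIdealPure_range {R M W T : Type u} [CommRing R]
    [AddCommGroup M] [Module R M] [AddCommGroup W] [Module R W]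
    (hT : max (max #M #R) ℵ₀ ≤ #T) (φ : M →ₗ[R] W) :
    ∃ ρ : M × (T →₀ R) →ₗ[R] W, ρ ∘ₗ LinearMap.inl R M (T →₀ R) = φ ∧
      (LinearMap.range ρ).IsIdealPure := by
  have hMR := le_of_max_le_left hT
  obtain ⟨N, hφN, hN, hNT⟩ := exists_le_isIdealPure_mk_le (le_of_max_le_right hT)
    (le_of_max_le_right hMR) (LinearMap.range φ) (mk_range_le.trans (le_of_max_le_left hMR))
  obtain ⟨e⟩ := le_def _ _ |>.mp hNT
  let g := N.subtype ∘ₗ Finsupp.linearCombination R (Function.invFun e)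
  have hg : LinearMap.range g = N := by
    rw [LinearMap.range_comp_of_range_eq_top, range_subtype]
    exact LinearMap.range_eq_top.mpr
      (Finsupp.linearCombination_surjective R (Function.invFun_surjective e.injective))
  refine ⟨φ.coprod g, LinearMap.coprod_inl _ _, ?_⟩
  rwa [LinearMap.range_coprod, hg, sup_eq_right.mpr hφN]

namespace WeakBalancedBigCM

variable (R : Type u) [CommRing R] [IsLocalRing R] (F : Type u) [AddCommGroup F] [Module R F]

abbrev PiQuotients : Type u :=
  ∀ K : {K : Submodule R F // IsWeakBalancedBigCM R (F ⧸ K)}, F ⧸ K.1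

noncomputable def toPiQuotients : F →ₗ[R] PiQuotients R F :=
  LinearMap.pi fun K => K.1.mkQ

theorem isWeakBalancedBigCM_piQuotients : IsWeakBalancedBigCM R (PiQuotients R F) :=
  isWeakBalancedBigCM_pi fun K => K.2

variable {R F}

theorem exists_comp_toPiQuotients_eq {W : Type u} [AddCommGroup W] [Module R W]
    (hW : IsWeakBalancedBigCM R W) (ρ : F →ₗ[R] W) (hρ : (LinearMap.range ρ).IsIdealPure) :
    ∃ ψ : PiQuotients R F →ₗ[R] W, ψ ∘ₗ toPiQuotients R F = ρ := by
  have hK : IsWeakBalancedBigCM R (F ⧸ LinearMap.ker ρ) :=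
    (hW.submodule hρ).of_linearEquiv ρ.quotKerEquivRange
  let π : PiQuotients R F →ₗ[R] F ⧸ LinearMap.ker ρ := LinearMap.proj (⟨LinearMap.ker ρ, hK⟩ :
    {K : Submodule R F // IsWeakBalancedBigCM R (F ⧸ K)})
  exact ⟨(LinearMap.ker ρ).liftQ ρ le_rfl ∘ₗ π, LinearMap.ext fun _ => rfl⟩

end WeakBalancedBigCM

open WeakBalancedBigCM in
theorem exists_weakBalancedBigCM_preenvelope_general
    (R : Type u) [CommRing R] [IsLocalRing R]
    (M : Type u) [AddCommGroup M] [Module R M] :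
    ∃ (W : Type u) (_ : AddCommGroup W) (_ : Module R W) (_ : IsWeakBalancedBigCM R W)
      (φ : M →ₗ[R] W),
      ∀ (W' : Type u) (_ : AddCommGroup W') (_ : Module R W'), IsWeakBalancedBigCM R W' →
        ∀ φ' : M →ₗ[R] W', ∃ ψ : W →ₗ[R] W', ψ ∘ₗ φ = φ' := by
  let T := (max (max #M #R) ℵ₀).out
  refine ⟨_, _, _, isWeakBalancedBigCM_piQuotients R (M × (T →₀ R)),
    toPiQuotients R _ ∘ₗ LinearMap.inl R M (T →₀ R), fun W' _ _ hW' φ' => ?_⟩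
  obtain ⟨ρ, rfl, hρ⟩ := exists_linearMap_comp_inl_eq_and_isIdealPure_range (mk_out _).ge φ'
  obtain ⟨ψ, hψ⟩ := exists_comp_toPiQuotients_eq hW' ρ hρ
  exact ⟨ψ, by rw [← LinearMap.comp_assoc, hψ]⟩

/-- **Theorem D (preenvelopes).** Over a Cohen--Macaulay noetherian local ring with a dualizing
module, every module has a preenvelope with respect to the class of weak balanced big CM
modules. -/
theorem exists_weakBalancedBigCM_preenvelope
    (R : Type u) [CommRing R] [IsNoetherianRing R] [IsLocalRing R]
    (hCM : IsCohenMacaulayLocalRing R)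
    (Ω : Type u) [AddCommGroup Ω] [Module R Ω] (hΩ : IsDualizingModule R Ω)
    (M : Type u) [AddCommGroup M] [Module R M] :
    ∃ (W : Type u) (_ : AddCommGroup W) (_ : Module R W) (_ : IsWeakBalancedBigCM R W)
      (φ : M →ₗ[R] W),
      ∀ (W' : Type u) (_ : AddCommGroup W') (_ : Module R W'), IsWeakBalancedBigCM R W' →
        ∀ φ' : M →ₗ[R] W', ∃ ψ : W →ₗ[R] W', ψ ∘ₗ φ = φ' :=
  exists_weakBalancedBigCM_preenvelope_general R M
end

section
/- Let (R, 𝔪, k) be a commutative noetherian local Cohen–Macaulay ring. The class of weak balanced big CM R-modules is resolving: it contains all projective R-modules, and for every short exact sequence of R-modules 0 → M' → M → M'' → 0 with M'' weak balanced big CM, the module M is weak balanced big CM if and only if M' is weak balanced big CM (in particular the class is closed under extensions and under kernels of epimorphisms). -/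
open CategoryTheory IsLocalRing

universe u
/-!
Over a Cohen–Macaulay ring every system of parameters is `R`-regular, and a sequence weakly
regular on `R` stays weakly regular on a flat (e.g. projective) module `P ≅ P ⊗ R`. For a short
exact sequence `0 → M' → M → M'' → 0` with `r` regular on `M''`, the snake lemma shows that `r` is
regular on `M` iff on `M'`, and that `0 → M'/rM' → M/rM → M''/rM'' → 0` is again short exact, so
one inducts along the sequence.
-/

open RingTheory.Sequence

section ShortExact

variable {R : Type*} [CommRing R] {M' M M'' : Type*}
  [AddCommGroup M'] [Module R M'] [AddCommGroup M] [Module R M]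
  [AddCommGroup M''] [Module R M''] {f : M' →ₗ[R] M} {g : M →ₗ[R] M''}

lemma QuotSMulTop.map_injective_of_isSMulRegular {r : R} (hf : Function.Injective f)
    (hfg : Function.Exact f g) (hr : IsSMulRegular M'' r) :
    Function.Injective (QuotSMulTop.map r f) := by
  have h0f : Function.Exact (0 : PUnit →ₗ[R] M') f :=
    (LinearMap.exact_zero_iff_injective PUnit f).mpr hf
  have := QuotSMulTop.map_first_exact_on_four_term_exact_of_isSMulRegular_last h0f hfg hr
  rw [map_zero] at this
  exact (LinearMap.exact_zero_iff_injective _ _).mp this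

lemma isSMulRegular_iff_of_shortExact {r : R} (hf : Function.Injective f)
    (hfg : Function.Exact f g) (hr : IsSMulRegular M'' r) :
    IsSMulRegular M r ↔ IsSMulRegular M' r :=
  ⟨fun h ↦ h.of_injective f hf,
    fun h ↦ isSMulRegular_of_range_eq_ker hf hfg.linearMap_ker_eq.symm h hr⟩

lemma isWeaklyRegular_iff_of_shortExact {rs : List R} (hf : Function.Injective f)
    (hg : Function.Surjective g) (hfg : Function.Exact f g) (hrs : IsWeaklyRegular M'' rs) :
    IsWeaklyRegular M rs ↔ IsWeaklyRegular M' rs := by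
  induction rs generalizing M' M M'' with
  | nil => exact iff_of_true (.nil R M) (.nil R M')
  | cons r rs ih =>
    obtain ⟨hr, hrs⟩ := (isWeaklyRegular_cons_iff M'' r rs).mp hrs
    rw [isWeaklyRegular_cons_iff, isWeaklyRegular_cons_iff,
      isSMulRegular_iff_of_shortExact hf hfg hr,
      ih (QuotSMulTop.map_injective_of_isSMulRegular hf hfg hr)
        (QuotSMulTop.map_surjective r hg) (QuotSMulTop.map_exact r hfg hg) hrs]

end ShortExact

lemma RingTheory.Sequence.IsWeaklyRegular.of_flat_module {R M : Type*} [CommRing R]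
    [AddCommGroup M] [Module R M] [Module.Flat R M] {rs : List R}
    (h : IsWeaklyRegular R rs) : IsWeaklyRegular M rs :=
  ((TensorProduct.rid R M).isWeaklyRegular_congr rs).mp h.isWeaklyRegular_lTensor

lemma IsCohenMacaulayLocalRing.isWeakBalancedBigCM_of_flat {R : Type u} [CommRing R]
    [IsLocalRing R] (hCM : IsCohenMacaulayLocalRing R) (M : Type u) [AddCommGroup M]
    [Module R M] [Module.Flat R M] : IsWeakBalancedBigCM R M :=
  fun xs hxs ↦ (hCM xs hxs).toIsWeaklyRegular.of_flat_module

lemma isWeakBalancedBigCM_iff_of_shortExact {R : Type u} [CommRing R] [IsLocalRing R]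
    {M' M M'' : Type u} [AddCommGroup M'] [Module R M'] [AddCommGroup M] [Module R M]
    [AddCommGroup M''] [Module R M''] {f : M' →ₗ[R] M} {g : M →ₗ[R] M''}
    (hf : Function.Injective f) (hg : Function.Surjective g) (hfg : Function.Exact f g)
    (h'' : IsWeakBalancedBigCM R M'') :
    IsWeakBalancedBigCM R M ↔ IsWeakBalancedBigCM R M' :=
  forall₂_congr fun xs hxs ↦ isWeaklyRegular_iff_of_shortExact hf hg hfg (h'' xs hxs)

theorem isWeakBalancedBigCM_resolving_general
    (R : Type u) [CommRing R] [IsLocalRing R]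
    (hCM : IsCohenMacaulayLocalRing R) :
    (∀ (P : Type u) (_ : AddCommGroup P) (_ : Module R P),
      Module.Projective R P → IsWeakBalancedBigCM R P) ∧
    (∀ (M' M M'' : Type u) (_ : AddCommGroup M') (_ : Module R M') (_ : AddCommGroup M)
      (_ : Module R M) (_ : AddCommGroup M'') (_ : Module R M'')
      (f : M' →ₗ[R] M) (g : M →ₗ[R] M''),
      Function.Injective f → Function.Surjective g → Function.Exact f g →
      IsWeakBalancedBigCM R M'' →
      (IsWeakBalancedBigCM R M ↔ IsWeakBalancedBigCM R M')) :=
  ⟨fun P _ _ _ ↦ hCM.isWeakBalancedBigCM_of_flat P,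
    fun _ _ _ _ _ _ _ _ _ _ _ hf hg hfg h'' ↦ isWeakBalancedBigCM_iff_of_shortExact hf hg hfg h''⟩

/-- The class of weak balanced big CM modules over a Cohen--Macaulay noetherian local ring is
resolving: it contains all projective modules, and for every short exact sequence
`0 → M' → M → M'' → 0` with `M''` weak balanced big CM, `M` is weak balanced big CM if and
only if `M'` is (hence the class is closed under extensions and kernels of epimorphisms). -/
theorem isWeakBalancedBigCM_resolving
    (R : Type u) [CommRing R] [IsNoetherianRing R] [IsLocalRing R]
    (hCM : IsCohenMacaulayLocalRing R) :
    (∀ (P : Type u) (_ : AddCommGroup P) (_ : Module R P),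
      Module.Projective R P → IsWeakBalancedBigCM R P) ∧
    (∀ (M' M M'' : Type u) (_ : AddCommGroup M') (_ : Module R M') (_ : AddCommGroup M)
      (_ : Module R M) (_ : AddCommGroup M'') (_ : Module R M'')
      (f : M' →ₗ[R] M) (g : M →ₗ[R] M''),
      Function.Injective f → Function.Surjective g → Function.Exact f g →
      IsWeakBalancedBigCM R M'' →
      (IsWeakBalancedBigCM R M ↔ IsWeakBalancedBigCM R M')) :=
  isWeakBalancedBigCM_resolving_general R hCM
end
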